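/- Let X and Y be two separable real Banach spaces, each satisfying condition (gF-2), and assume that closedAge(X) = closedAge(Y), i.e. a finite-dimensional normed space is finitely representable in X if and only if it is finitely representable in Y. Then X and Y are linearly isometric, i.e. there exists a surjective linear isometry from X onto Y. -/

import Mathlib

noncomputable section

open Real Metric

/-- A bundled finite-dimensional real normed space. -/
structure FinNormedSpace where
  carrier : Type
  [grp : NormedAddCommGroup carrier]
  [mod : NormedSpace ℝ carrier]
  [fd : FiniteDimensional ℝ carrier]

attribute [instance] FinNormedSpace.grp FinNormedSpace.mod FinNormedSpace.fd

instance : CoeSort FinNormedSpace Type := ⟨FinNormedSpace.carrier⟩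

/-- `T ∈ Emb_C(E, F)`. -/
def IsEmbC {E F : Type*} [NormedAddCommGroup E] [NormedSpace ℝ E]
    [NormedAddCommGroup F] [NormedSpace ℝ F] (C : ℝ) (T : E →L[ℝ] F) : Prop :=
  ∀ x : E, Real.exp (-C) * ‖x‖ ≤ ‖T x‖ ∧ ‖T x‖ ≤ Real.exp C * ‖x‖

/-- `T ∈ Emb(E, F)`, i.e. `T` is a linear isometric embedding. -/
def IsIsomEmb {E F : Type*} [NormedAddCommGroup E] [NormedSpace ℝ E]
    [NormedAddCommGroup F] [NormedSpace ℝ F] (T : E →L[ℝ] F) : Prop :=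
  ∀ x : E, ‖T x‖ = ‖x‖

/-- The continuous linear map underlying a surjective linear isometry. -/
def toCLM {X Y : Type*} [NormedAddCommGroup X] [NormedSpace ℝ X]
    [NormedAddCommGroup Y] [NormedSpace ℝ Y] (T : X ≃ₗᵢ[ℝ] Y) : X →L[ℝ] Y :=
  T.toLinearIsometry.toContinuousLinearMap

/-- `F` is finitely representable in `X`. -/
def FinRep (F : FinNormedSpace) (X : Type*) [NormedAddCommGroup X]
    [NormedSpace ℝ X] : Prop :=
  ∀ ε : ℝ, 0 < ε → ∃ T : F.carrier →L[ℝ] X, IsEmbC ε T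

/-- The inclusion of a submodule into a larger one, as a continuous linear map. -/
def inclCLM {X : Type*} [NormedAddCommGroup X] [NormedSpace ℝ X]
    {E F : Submodule ℝ X} (h : E ≤ F) : E →L[ℝ] F :=
  (Submodule.subtypeL E).codRestrict F (fun x => h x.2)

/-- Condition (gF-2). -/
def GF2 (X : Type*) [NormedAddCommGroup X] [NormedSpace ℝ X] : Prop :=
  ∀ (E : Submodule ℝ X), FiniteDimensional ℝ E → ∀ ε : ℝ, 0 < ε →
    ∃ (F : FinNormedSpace), FinRep F X ∧ ∃ φ : E →L[ℝ] F.carrier, IsEmbC ε φ ∧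
      ∃ δ : ℝ, 0 < δ ∧ ∀ (G : FinNormedSpace), FinRep G X →
        ∀ ψ : F.carrier →L[ℝ] G.carrier, IsEmbC δ ψ → ∀ η : ℝ, 0 < η →
          ∃ ι : G.carrier →L[ℝ] X, IsEmbC η ι ∧
            ‖E.subtypeL - ι.comp (ψ.comp φ)‖ < ε

/-!
A back-and-forth argument. For a finite-dimensional `E ⊆ X`, (gF-2) provides a guard
`φ : E → F`. As the ages agree, `F` embeds almost isometrically into `Y`; guarding the span of
its image in `Y` and feeding the composite of the two guards into the amalgamation property of
`φ` yields a map back into `X` which almost inverts the first one. Iterating with tolerances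
`2⁻ⁿ`, while absorbing dense sequences of both spaces, produces an approximate intertwining of
exhausting chains of finite-dimensional subspaces. Its maps `Eₙ → Y` converge to a linear
isometry `X → Y`, whose range is closed and, because of the maps backwards, dense.
-/

section IsEmbC

variable {E F G : Type*} [NormedAddCommGroup E] [NormedSpace ℝ E]
  [NormedAddCommGroup F] [NormedSpace ℝ F] [NormedAddCommGroup G] [NormedSpace ℝ G]
  {c d : ℝ}

theorem IsEmbC.mono {T : E →L[ℝ] F} (h : IsEmbC c T) (hcd : c ≤ d) : IsEmbC d T := fun x =>
  ⟨le_trans (by gcongr) (h x).1, (h x).2.trans (by gcongr)⟩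

theorem IsEmbC.comp {S : F →L[ℝ] G} {T : E →L[ℝ] F} (hS : IsEmbC d S) (hT : IsEmbC c T) :
    IsEmbC (d + c) (S.comp T) := by
  intro x
  obtain ⟨hT₁, hT₂⟩ := hT x
  obtain ⟨hS₁, hS₂⟩ := hS (T x)
  constructor
  · calc exp (-(d + c)) * ‖x‖ = exp (-d) * (exp (-c) * ‖x‖) := by
          rw [neg_add, exp_add]; ring
      _ ≤ exp (-d) * ‖T x‖ := by gcongr
      _ ≤ ‖S (T x)‖ := hS₁
  · calc ‖S (T x)‖ ≤ exp d * ‖T x‖ := hS₂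
      _ ≤ exp d * (exp c * ‖x‖) := by gcongr
      _ = exp (d + c) * ‖x‖ := by rw [exp_add]; ring

theorem IsEmbC.opNorm_le {T : E →L[ℝ] F} (h : IsEmbC c T) : ‖T‖ ≤ exp c :=
  T.opNorm_le_bound (exp_pos c).le fun x => (h x).2

theorem IsEmbC.codRestrict {T : E →L[ℝ] F} (h : IsEmbC c T) (p : Submodule ℝ F)
    (hp : ∀ x, T x ∈ p) : IsEmbC c (T.codRestrict p hp) :=
  h

theorem IsEmbC.subtypeL_comp {p : Submodule ℝ F} {T : E →L[ℝ] p} (h : IsEmbC c T) :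
    IsEmbC c (p.subtypeL.comp T) :=
  h

end IsEmbC

theorem Submodule.norm_subtypeL_comp {X Z : Type*} [NormedAddCommGroup X] [NormedSpace ℝ X]
    [NormedAddCommGroup Z] [NormedSpace ℝ Z] (p : Submodule ℝ X) (A : Z →L[ℝ] p) :
    ‖p.subtypeL.comp A‖ = ‖A‖ :=
  p.subtypeₗᵢ.norm_toContinuousLinearMap_comp

theorem norm_inclCLM_sub {X : Type*} [NormedAddCommGroup X] [NormedSpace ℝ X]
    {p q : Submodule ℝ X} (h : p ≤ q)
    (A : p →L[ℝ] q) : ‖inclCLM h - A‖ = ‖p.subtypeL - q.subtypeL.comp A‖ := by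
  rw [← q.norm_subtypeL_comp]
  congr 1

namespace GuardedFraisse

open Filter Topology

theorem exp_le_three {c : ℝ} (hc : c ≤ 1) : exp c ≤ 3 :=
  (exp_le_exp.2 hc).trans (exp_one_lt_d9.le.trans (by norm_num))

theorem half_pow_le_one (n : ℕ) : (1 / 2 : ℝ) ^ n ≤ 1 :=
  pow_le_one₀ (by norm_num) (by norm_num)

theorem half_pow_succ_le (n : ℕ) : (1 / 2 : ℝ) ^ (n + 1) ≤ (1 / 2) ^ n :=
  pow_le_pow_of_le_one (by norm_num) (by norm_num) n.le_succ

theorem two_mul_le_half_pow {ε : ℝ} {n : ℕ} (h : ε ≤ (1 / 2) ^ (n + 1)) :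
    2 * ε ≤ (1 / 2) ^ n := by
  rw [pow_succ] at h
  linarith

theorem tendsto_half_pow : Tendsto (fun n : ℕ => (1 / 2 : ℝ) ^ n) atTop (𝓝 0) :=
  tendsto_pow_atTop_nhds_zero_of_lt_one (by norm_num) (by norm_num)

theorem norm_eq_of_tendsto {Z : Type*} [SeminormedAddCommGroup Z] {a : ℕ → Z} {z : Z}
    {ε : ℕ → ℝ} {r : ℝ} (ha : Tendsto a atTop (𝓝 z)) (hε : Tendsto ε atTop (𝓝 0))
    (hbound : ∀ᶠ n in atTop, exp (-ε n) * r ≤ ‖a n‖ ∧ ‖a n‖ ≤ exp (ε n) * r) : ‖z‖ = r := by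
  have hexp : ∀ {f : ℕ → ℝ}, Tendsto f atTop (𝓝 0) →
      Tendsto (fun n => exp (f n) * r) atTop (𝓝 r) :=
    fun hf => by simpa using ((continuous_exp.tendsto 0).comp hf).mul_const r
  exact le_antisymm (le_of_tendsto_of_tendsto ha.norm (hexp hε) (hbound.mono fun _ h => h.2))
    (le_of_tendsto_of_tendsto (hexp (by simpa using hε.neg)) ha.norm (hbound.mono fun _ h => h.1))

variable {X Y : Type*} [NormedAddCommGroup X] [NormedSpace ℝ X]
  [NormedAddCommGroup Y] [NormedSpace ℝ Y]

theorem _root_.LinearIsometry.exists_extend [CompleteSpace Y] {D : Submodule ℝ X}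
    (hD : Dense (D : Set X)) (g : D →ₗᵢ[ℝ] Y) : ∃ T : X →ₗᵢ[ℝ] Y, ∀ d : D, T d = g d := by
  have hde : DenseRange D.subtypeL := by simpa [DenseRange] using hD
  set T := g.toContinuousLinearMap.extend D.subtypeL
  have hT : ∀ d : D, T d = g d :=
    g.toContinuousLinearMap.extend_eq hde isometry_subtype_coe.isUniformInducing
  have hnorm : ∀ x, ‖T x‖ = ‖x‖ := isClosed_property hde
    (isClosed_eq (continuous_norm.comp T.continuous) continuous_norm) fun d => by
      simp [hT]
  exact ⟨⟨T.toLinearMap, hnorm⟩, hT⟩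

theorem _root_.LinearIsometry.surjective_of_subset_closure_range [CompleteSpace X]
    (T : X →ₗᵢ[ℝ] Y) {S : Set Y} (hS : Dense S) (hST : S ⊆ closure (Set.range T)) :
    Function.Surjective T := by
  have hclosed : IsClosed (Set.range T) := T.isometry.isClosedEmbedding.isClosed_range
  have hdense : Dense (Set.range T) := hS.mono (hclosed.closure_eq ▸ hST)
  rw [← Set.range_eq_univ, ← hclosed.closure_eq, hdense.closure_eq]

section Limit

variable {E : ℕ → Submodule ℝ X} (u : ∀ n, E n →L[ℝ] Y)

open scoped Classical in
/-- Only the values for large `n` matter: each `x ∈ ⋃ n, E n` lies in `E n` from some `n` on. -/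
def extendByZero (n : ℕ) (x : X) : Y :=
  if h : x ∈ E n then u n ⟨x, h⟩ else 0

theorem extendByZero_of_mem {n : ℕ} {x : X} (h : x ∈ E n) :
    extendByZero u n x = u n ⟨x, h⟩ :=
  dif_pos h

theorem extendByZero_add {n : ℕ} {x x' : X} (h : x ∈ E n) (h' : x' ∈ E n) :
    extendByZero u n (x + x') = extendByZero u n x + extendByZero u n x' := by
  rw [extendByZero_of_mem u h, extendByZero_of_mem u h', extendByZero_of_mem u (add_mem h h'),
    ← map_add]
  rfl

theorem extendByZero_smul {n : ℕ} {x : X} (h : x ∈ E n) (c : ℝ) :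
    extendByZero u n (c • x) = c • extendByZero u n x := by
  rw [extendByZero_of_mem u h, extendByZero_of_mem u (Submodule.smul_mem _ c h), ← map_smul]
  rfl

def IsCoherent (hE : Monotone E) (C : ℝ) : Prop :=
  ∀ n, ‖(u (n + 1)).comp (inclCLM (hE (n.le_add_right 1))) - u n‖ ≤ C * (1 / 2) ^ n

variable {u} {hE : Monotone E} {C : ℝ}

theorem dist_extendByZero_succ_le (hcoh : IsCoherent u hE C) {n : ℕ} {x : X} (hx : x ∈ E n) :
    dist (extendByZero u n x) (extendByZero u (n + 1) x) ≤ C * (1 / 2) ^ n * ‖x‖ := by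
  rw [extendByZero_of_mem u hx, extendByZero_of_mem u (hE (n.le_add_right 1) hx), dist_comm,
    dist_eq_norm]
  exact ((u (n + 1)).comp (inclCLM _) - u n).le_of_opNorm_le (hcoh n) ⟨x, hx⟩

theorem tendsto_limUnder_extendByZero [CompleteSpace Y] (hcoh : IsCoherent u hE C) {n : ℕ}
    {x : X} (hx : x ∈ E n) :
    Tendsto (extendByZero u · x) atTop (𝓝 (limUnder atTop (extendByZero u · x))) ∧
      dist (u n ⟨x, hx⟩) (limUnder atTop (extendByZero u · x)) ≤ 2 * C * (1 / 2) ^ n * ‖x‖ := by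
  have hgeom : ∀ k, dist (extendByZero u (k + n) x) (extendByZero u (k + 1 + n) x) ≤
      C * (1 / 2) ^ n * ‖x‖ * (1 / 2) ^ k := fun k => by
    simpa [add_right_comm k 1 n, pow_add, mul_assoc, mul_comm, mul_left_comm] using
      dist_extendByZero_succ_le hcoh (hE (Nat.le_add_left n k) hx)
  obtain ⟨y, hy⟩ := cauchySeq_tendsto_of_complete
    (cauchySeq_of_le_geometric _ _ (by norm_num) hgeom)
  have hlim : Tendsto (extendByZero u · x) atTop (𝓝 y) := (tendsto_add_atTop_iff_nat n).mp hy
  rw [hlim.limUnder_eq]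
  refine ⟨hlim, ?_⟩
  have := dist_le_of_le_geometric_of_tendsto₀ _ _ (by norm_num) hgeom hy
  rw [zero_add, extendByZero_of_mem u hx] at this
  exact this.trans_eq (by ring)

theorem exists_linearIsometry_of_isCoherent [CompleteSpace Y] (hcoh : IsCoherent u hE C)
    (hdense : Dense (⋃ n, (E n : Set X))) {ε : ℕ → ℝ} (hε : Tendsto ε atTop (𝓝 0))
    (hu : ∀ n, IsEmbC (ε n) (u n)) :
    ∃ T : X →ₗᵢ[ℝ] Y, ∀ n (x : E n), ‖T x - u n x‖ ≤ 2 * C * (1 / 2) ^ n * ‖x‖ := by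
  set D : Submodule ℝ X := ⨆ n, E n
  have hmem : ∀ {x}, x ∈ D ↔ ∃ n, x ∈ E n := Submodule.mem_iSup_of_directed E hE.directed_le
  have hcommon : ∀ {x x'}, x ∈ D → x' ∈ D → ∃ n, x ∈ E n ∧ x' ∈ E n := fun hx hx' => by
    obtain ⟨n, hn⟩ := hmem.1 hx
    obtain ⟨n', hn'⟩ := hmem.1 hx'
    exact ⟨max n n', hE (le_max_left n n') hn, hE (le_max_right n n') hn'⟩
  set g : X → Y := fun x => limUnder atTop (extendByZero u · x)
  have hg : ∀ {n x} (hx : x ∈ E n), Tendsto (extendByZero u · x) atTop (𝓝 (g x)) :=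
    fun hx => (tendsto_limUnder_extendByZero hcoh hx).1
  let gD : D →ₗᵢ[ℝ] Y :=
    { toFun := fun d => g d
      map_add' := fun d d' => by
        obtain ⟨n, hn, hn'⟩ := hcommon d.2 d'.2
        refine tendsto_nhds_unique (hg (add_mem hn hn')) (((hg hn).add (hg hn')).congr' ?_)
        filter_upwards [eventually_ge_atTop n] with m hm
        exact (extendByZero_add u (hE hm hn) (hE hm hn')).symm
      map_smul' := fun c d => by
        obtain ⟨n, hn⟩ := hmem.1 d.2
        refine tendsto_nhds_unique (hg (Submodule.smul_mem _ c hn))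
          (((hg hn).const_smul c).congr' ?_)
        filter_upwards [eventually_ge_atTop n] with m hm
        exact (extendByZero_smul u (hE hm hn) c).symm
      norm_map' := fun d => by
        obtain ⟨n, hn⟩ := hmem.1 d.2
        refine norm_eq_of_tendsto (hg hn) hε ?_
        filter_upwards [eventually_ge_atTop n] with m hm
        rw [extendByZero_of_mem u (hE hm hn)]
        exact hu m ⟨d, hE hm hn⟩ }
  have hD : Dense (D : Set X) := hdense.mono <| Set.iUnion_subset fun n =>
    SetLike.coe_subset_coe.2 (le_iSup E n)
  obtain ⟨T, hT⟩ := gD.exists_extend hD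
  refine ⟨T, fun n x => ?_⟩
  rw [hT ⟨x, hmem.2 ⟨n, x.2⟩⟩, ← dist_eq_norm, dist_comm]
  exact (tendsto_limUnder_extendByZero hcoh x.2).2

end Limit

variable (X Y) in
/-- An approximate intertwining `E 0 → F 0 → E 1 → F 1 → ⋯` of exhausting chains of subspaces
whose triangles commute up to `2⁻ⁿ`. -/
structure ApproxIntertwining where
  E : ℕ → Submodule ℝ X
  F : ℕ → Submodule ℝ Y
  monotone_E : Monotone E
  monotone_F : Monotone F
  dense_E : Dense (⋃ n, (E n : Set X))
  dense_F : Dense (⋃ n, (F n : Set Y))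
  t : ∀ n, E n →L[ℝ] F n
  s : ∀ n, F n →L[ℝ] E (n + 1)
  isEmbC_t : ∀ n, IsEmbC ((1 / 2) ^ n) (t n)
  isEmbC_s : ∀ n, IsEmbC ((1 / 2) ^ n) (s n)
  norm_incl_sub_s_comp_t :
    ∀ n, ‖inclCLM (monotone_E (n.le_add_right 1)) - (s n).comp (t n)‖ ≤ (1 / 2) ^ n
  norm_incl_sub_t_comp_s :
    ∀ n, ‖inclCLM (monotone_F (n.le_add_right 1)) - (t (n + 1)).comp (s n)‖ ≤ (1 / 2) ^ n

namespace ApproxIntertwining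

section

variable (I : ApproxIntertwining X Y)

def tY (n : ℕ) : I.E n →L[ℝ] Y :=
  (I.F n).subtypeL.comp (I.t n)

theorem isCoherent_tY : IsCoherent I.tY I.monotone_E 6 := by
  intro n
  have hdecomp : (I.t (n + 1)).comp (inclCLM (I.monotone_E (n.le_add_right 1))) -
      (inclCLM (I.monotone_F (n.le_add_right 1))).comp (I.t n) =
      (I.t (n + 1)).comp (inclCLM (I.monotone_E (n.le_add_right 1)) - (I.s n).comp (I.t n)) -
      (inclCLM (I.monotone_F (n.le_add_right 1)) - (I.t (n + 1)).comp (I.s n)).comp (I.t n) := by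
    simp only [ContinuousLinearMap.comp_sub, ContinuousLinearMap.sub_comp,
      ContinuousLinearMap.comp_assoc]
    abel
  have htY : (I.tY (n + 1)).comp (inclCLM (I.monotone_E (n.le_add_right 1))) - I.tY n =
      (I.F (n + 1)).subtypeL.comp ((I.t (n + 1)).comp (inclCLM (I.monotone_E (n.le_add_right 1))) -
      (inclCLM (I.monotone_F (n.le_add_right 1))).comp (I.t n)) := by
    ext; rfl
  rw [htY, Submodule.norm_subtypeL_comp, hdecomp]
  refine (norm_sub_le (E := I.E n →L[ℝ] I.F (n + 1)) _ _).trans ?_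
  calc _ ≤ ‖I.t (n + 1)‖ * ‖inclCLM (I.monotone_E (n.le_add_right 1)) - (I.s n).comp (I.t n)‖ +
        ‖inclCLM (I.monotone_F (n.le_add_right 1)) - (I.t (n + 1)).comp (I.s n)‖ * ‖I.t n‖ :=
        add_le_add (ContinuousLinearMap.opNorm_comp_le _ _) (ContinuousLinearMap.opNorm_comp_le _ _)
    _ ≤ 3 * (1 / 2) ^ n + (1 / 2) ^ n * 3 := by
        gcongr
        · exact (I.isEmbC_t _).opNorm_le.trans (exp_le_three (half_pow_le_one _))
        · exact I.norm_incl_sub_s_comp_t n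
        · exact I.norm_incl_sub_t_comp_s n
        · exact (I.isEmbC_t _).opNorm_le.trans (exp_le_three (half_pow_le_one _))
    _ = 6 * (1 / 2) ^ n := by ring

theorem norm_sub_limit_s_le {T : X →ₗᵢ[ℝ] Y}
    (hT : ∀ n (x : I.E n), ‖T x - I.tY n x‖ ≤ 2 * 6 * (1 / 2) ^ n * ‖x‖) (n : ℕ) (y : I.F n) :
    ‖(y : Y) - T (I.s n y)‖ ≤ 19 * (1 / 2) ^ n * ‖y‖ := by
  have hts : ‖(y : Y) - I.tY (n + 1) (I.s n y)‖ ≤ (1 / 2) ^ n * ‖y‖ :=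
    (inclCLM (I.monotone_F (n.le_add_right 1)) - (I.t (n + 1)).comp (I.s n)).le_of_opNorm_le
      (I.norm_incl_sub_t_comp_s n) y
  have hs : ‖I.s n y‖ ≤ 3 * ‖y‖ := ((I.isEmbC_s n y).2).trans
    (by gcongr; exact exp_le_three (half_pow_le_one n))
  have hTs : ‖I.tY (n + 1) (I.s n y) - T (I.s n y)‖ ≤ 2 * 6 * (1 / 2) ^ (n + 1) * (3 * ‖y‖) := by
    rw [norm_sub_rev]
    exact (hT _ _).trans (by gcongr)
  calc ‖(y : Y) - T (I.s n y)‖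
      ≤ ‖(y : Y) - I.tY (n + 1) (I.s n y)‖ + ‖I.tY (n + 1) (I.s n y) - T (I.s n y)‖ :=
        norm_sub_le_norm_sub_add_norm_sub _ _ _
    _ ≤ (1 / 2) ^ n * ‖y‖ + 2 * 6 * (1 / 2) ^ (n + 1) * (3 * ‖y‖) := add_le_add hts hTs
    _ = 19 * (1 / 2) ^ n * ‖y‖ := by ring

theorem iUnion_F_subset_closure_range {T : X →ₗᵢ[ℝ] Y}
    (hT : ∀ n (x : I.E n), ‖T x - I.tY n x‖ ≤ 2 * 6 * (1 / 2) ^ n * ‖x‖) :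
    ⋃ n, (I.F n : Set Y) ⊆ closure (Set.range T) := by
  simp only [Set.iUnion_subset_iff]
  intro N y hy
  rw [Metric.mem_closure_iff]
  intro ε hε
  have hlim : Tendsto (fun n => 19 * (1 / 2 : ℝ) ^ n * ‖y‖) atTop (𝓝 0) := by
    simpa using (tendsto_half_pow.const_mul 19).mul_const ‖y‖
  obtain ⟨n, hNn, hn⟩ := ((eventually_ge_atTop N).and (hlim.eventually (gt_mem_nhds hε))).exists
  refine ⟨_, ⟨I.s n ⟨y, I.monotone_F hNn hy⟩, rfl⟩, ?_⟩
  rw [dist_eq_norm]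
  exact (I.norm_sub_limit_s_le hT n ⟨y, _⟩).trans_lt hn

end

theorem nonempty_linearIsometryEquiv [CompleteSpace X] [CompleteSpace Y]
    (I : ApproxIntertwining X Y) :
    Nonempty (X ≃ₗᵢ[ℝ] Y) := by
  obtain ⟨T, hT⟩ := exists_linearIsometry_of_isCoherent I.isCoherent_tY I.dense_E
    tendsto_half_pow
    fun n => (I.isEmbC_t n).subtypeL_comp
  exact ⟨.ofSurjective T (T.surjective_of_subset_closure_range I.dense_F
    (I.iUnion_F_subset_closure_range hT))⟩

end ApproxIntertwining

variable (X) in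
structure Guard (E : Submodule ℝ X) (ε : ℝ) where
  F : FinNormedSpace
  finRep : FinRep F X
  φ : E →L[ℝ] F
  isEmbC_φ : IsEmbC ε φ
  δ : ℝ
  δ_pos : 0 < δ
  amalgamate : ∀ G : FinNormedSpace, FinRep G X → ∀ ψ : F →L[ℝ] G, IsEmbC δ ψ →
    ∀ η : ℝ, 0 < η → ∃ ι : G →L[ℝ] X, IsEmbC η ι ∧ ‖E.subtypeL - ι.comp (ψ.comp φ)‖ < ε

theorem _root_.GF2.nonempty_guard (hX : GF2 X) (E : Submodule ℝ X) [FiniteDimensional ℝ E]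
    {ε : ℝ} (hε : 0 < ε) : Nonempty (Guard X E ε) := by
  obtain ⟨F, hF, φ, hφ, δ, hδ, h⟩ := hX E inferInstance ε hε
  exact ⟨⟨F, hF, φ, hφ, δ, hδ, h⟩⟩

variable (X Y) in
/-- Half a step of the back-and-forth: a guard of `E ⊆ X` whose target is copied into `Y`
finely enough (within `δ / 2`) that the copy can later be fed back into the guard. -/
structure Link where
  E : Submodule ℝ X
  [finiteDimensional : FiniteDimensional ℝ E]
  ε : ℝ
  guard : Guard X E ε
  ι : guard.F →L[ℝ] Y
  isEmbC_ι : IsEmbC (min ε (guard.δ / 2)) ι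

attribute [instance] Link.finiteDimensional

namespace Link

def map (p : Link X Y) : p.E →L[ℝ] Y :=
  p.ι.comp p.guard.φ

theorem isEmbC_map (p : Link X Y) : IsEmbC (2 * p.ε) p.map :=
  (p.isEmbC_ι.comp p.guard.isEmbC_φ).mono (by linarith [min_le_left p.ε (p.guard.δ / 2)])

def InvertedBy (p : Link X Y) (q : Link Y X) : Prop :=
  ∃ h : ∀ x, p.map x ∈ q.E, ‖p.E.subtypeL - q.map.comp (p.map.codRestrict q.E h)‖ < p.ε

def initial (hX : GF2 X) (hAge : ∀ F, FinRep F X → FinRep F Y) (W : Submodule ℝ X)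
    [FiniteDimensional ℝ W] (ε : ℝ) (hε : 0 < ε) : Link X Y :=
  let g := (hX.nonempty_guard W hε).some
  have hι := hAge g.F g.finRep (min ε (g.δ / 2)) (lt_min hε (half_pos g.δ_pos))
  ⟨W, ε, g, hι.choose, hι.choose_spec⟩

theorem exists_invertedBy (p : Link X Y) (hY : GF2 Y) (hAge : ∀ F, FinRep F Y → FinRep F X)
    (W : Submodule ℝ Y) [FiniteDimensional ℝ W] {ε : ℝ} (hε : 0 < ε) :
    ∃ q : Link Y X, W ≤ q.E ∧ q.ε ≤ ε ∧ p.InvertedBy q := by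
  set E' := W ⊔ LinearMap.range p.ι.toLinearMap
  have hιE' : ∀ z, p.ι z ∈ E' := fun z => Submodule.mem_sup_right ⟨z, rfl⟩
  set ε' := min ε (p.guard.δ / 2)
  have hε' : 0 < ε' := lt_min hε (half_pos p.guard.δ_pos)
  obtain ⟨g⟩ := hY.nonempty_guard E' hε'
  set ψ := g.φ.comp (p.ι.codRestrict E' hιE')
  have hψ : IsEmbC p.guard.δ ψ := (g.isEmbC_φ.comp (p.isEmbC_ι.codRestrict E' hιE')).mono
    (by linarith [min_le_right ε (p.guard.δ / 2), min_le_right p.ε (p.guard.δ / 2)])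
  obtain ⟨m, hm, hclose⟩ := p.guard.amalgamate g.F (hAge g.F g.finRep) ψ hψ
    (min ε' (g.δ / 2)) (lt_min hε' (half_pos g.δ_pos))
  exact ⟨⟨E', ε', g, m, hm⟩, le_sup_left, min_le_left _ _, fun x => hιE' _, hclose⟩

def next (p : Link X Y) (hY : GF2 Y) (hAge : ∀ F, FinRep F Y → FinRep F X)
    (W : Submodule ℝ Y) [FiniteDimensional ℝ W] (ε : ℝ) (hε : 0 < ε) : Link Y X :=
  (p.exists_invertedBy hY hAge W hε).choose

theorem next_spec (p : Link X Y) (hY : GF2 Y) (hAge : ∀ F, FinRep F Y → FinRep F X)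
    (W : Submodule ℝ Y) [FiniteDimensional ℝ W] (ε : ℝ) (hε : 0 < ε) :
    W ≤ (p.next hY hAge W ε hε).E ∧ (p.next hY hAge W ε hε).ε ≤ ε ∧
      p.InvertedBy (p.next hY hAge W ε hε) :=
  (p.exists_invertedBy hY hAge W hε).choose_spec

theorem InvertedBy.norm_inclCLM_sub_le {p : Link X Y} {q : Link Y X} (h : p.InvertedBy q)
    {E' : Submodule ℝ X} (hE : p.E ≤ E') (hq : ∀ y, q.map y ∈ E') :
    ‖inclCLM hE - (q.map.codRestrict E' hq).comp (p.map.codRestrict q.E h.fst)‖ ≤ p.ε := by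
  rw [norm_inclCLM_sub]
  exact h.snd.le

end Link

open Submodule in
def chain (hX : GF2 X) (hY : GF2 Y) (hAge : ∀ F : FinNormedSpace, FinRep F X ↔ FinRep F Y)
    (x : ℕ → X) (y : ℕ → Y) : ℕ → Link X Y × Link Y X
  | 0 =>
    let p := Link.initial hX (fun F => (hAge F).mp) (span ℝ {x 0}) (1 / 2) (by norm_num)
    (p, p.next hY (fun F => (hAge F).mpr) (span ℝ {y 0}) (1 / 2) (by norm_num))
  | n + 1 =>
    let p := (chain hX hY hAge x y n).2.next hX (fun F => (hAge F).mp)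
      ((chain hX hY hAge x y n).1.E ⊔ span ℝ {x (n + 1)}) ((1 / 2) ^ (n + 2)) (by positivity)
    (p, p.next hY (fun F => (hAge F).mpr)
      ((chain hX hY hAge x y n).2.E ⊔ span ℝ {y (n + 1)}) ((1 / 2) ^ (n + 2)) (by positivity))

section Chain

open Submodule

variable (hX : GF2 X) (hY : GF2 Y) (hAge : ∀ F : FinNormedSpace, FinRep F X ↔ FinRep F Y)
  (x : ℕ → X) (y : ℕ → Y)

theorem chain_fst_E_le (n : ℕ) :
    (chain hX hY hAge x y n).1.E ≤ (chain hX hY hAge x y (n + 1)).1.E :=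
  le_sup_left.trans (Link.next_spec _ hX (fun F => (hAge F).mp) _ _ (by positivity)).1

theorem chain_snd_E_le (n : ℕ) :
    (chain hX hY hAge x y n).2.E ≤ (chain hX hY hAge x y (n + 1)).2.E :=
  le_sup_left.trans (Link.next_spec _ hY (fun F => (hAge F).mpr) _ _ (by positivity)).1

theorem mem_chain_fst_E (n : ℕ) : x n ∈ (chain hX hY hAge x y n).1.E := by
  cases n with
  | zero => exact mem_span_singleton_self _
  | succ n =>
    exact (Link.next_spec _ hX (fun F => (hAge F).mp) _ _ (by positivity)).1
      (mem_sup_right (mem_span_singleton_self _))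

theorem mem_chain_snd_E (n : ℕ) : y n ∈ (chain hX hY hAge x y n).2.E := by
  cases n with
  | zero =>
    exact (Link.next_spec _ hY (fun F => (hAge F).mpr) _ (1 / 2) (by norm_num)).1
      (mem_span_singleton_self _)
  | succ n =>
    exact (Link.next_spec _ hY (fun F => (hAge F).mpr) _ _ (by positivity)).1
      (mem_sup_right (mem_span_singleton_self _))

theorem chain_fst_ε_le (n : ℕ) : (chain hX hY hAge x y n).1.ε ≤ (1 / 2) ^ (n + 1) := by
  cases n with
  | zero => exact (pow_one _).ge
  | succ n => exact (Link.next_spec _ hX (fun F => (hAge F).mp) _ _ (by positivity)).2.1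

theorem chain_snd_ε_le (n : ℕ) : (chain hX hY hAge x y n).2.ε ≤ (1 / 2) ^ (n + 1) := by
  cases n with
  | zero =>
    exact (Link.next_spec _ hY (fun F => (hAge F).mpr) _ (1 / 2) (by norm_num)).2.1.trans
      (pow_one _).ge
  | succ n => exact (Link.next_spec _ hY (fun F => (hAge F).mpr) _ _ (by positivity)).2.1

theorem chain_fst_invertedBy (n : ℕ) :
    (chain hX hY hAge x y n).1.InvertedBy (chain hX hY hAge x y n).2 := by
  cases n with
  | zero => exact (Link.next_spec _ hY (fun F => (hAge F).mpr) _ (1 / 2) (by norm_num)).2.2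
  | succ n => exact (Link.next_spec _ hY (fun F => (hAge F).mpr) _ _ (by positivity)).2.2

theorem chain_snd_invertedBy (n : ℕ) :
    (chain hX hY hAge x y n).2.InvertedBy (chain hX hY hAge x y (n + 1)).1 :=
  (Link.next_spec _ hX (fun F => (hAge F).mp) _ _ (by positivity)).2.2

end Chain

def approxIntertwining (hX : GF2 X) (hY : GF2 Y)
    (hAge : ∀ F : FinNormedSpace, FinRep F X ↔ FinRep F Y) {x : ℕ → X} {y : ℕ → Y}
    (hx : DenseRange x) (hy : DenseRange y) : ApproxIntertwining X Y where
  E n := (chain hX hY hAge x y n).1.E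
  F n := (chain hX hY hAge x y n).2.E
  monotone_E := monotone_nat_of_le_succ (chain_fst_E_le hX hY hAge x y)
  monotone_F := monotone_nat_of_le_succ (chain_snd_E_le hX hY hAge x y)
  dense_E := hx.mono <| Set.range_subset_iff.2 fun n =>
    Set.mem_iUnion.2 ⟨n, mem_chain_fst_E hX hY hAge x y n⟩
  dense_F := hy.mono <| Set.range_subset_iff.2 fun n =>
    Set.mem_iUnion.2 ⟨n, mem_chain_snd_E hX hY hAge x y n⟩
  t n := (chain hX hY hAge x y n).1.map.codRestrict _ (chain_fst_invertedBy hX hY hAge x y n).fst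
  s n := (chain hX hY hAge x y n).2.map.codRestrict _ (chain_snd_invertedBy hX hY hAge x y n).fst
  isEmbC_t n := ((chain hX hY hAge x y n).1.isEmbC_map.codRestrict _ _).mono
    (two_mul_le_half_pow (chain_fst_ε_le hX hY hAge x y n))
  isEmbC_s n := ((chain hX hY hAge x y n).2.isEmbC_map.codRestrict _ _).mono
    (two_mul_le_half_pow (chain_snd_ε_le hX hY hAge x y n))
  norm_incl_sub_s_comp_t n :=
    ((chain_fst_invertedBy hX hY hAge x y n).norm_inclCLM_sub_le _ _).trans
      ((chain_fst_ε_le hX hY hAge x y n).trans (half_pow_succ_le n))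
  norm_incl_sub_t_comp_s n :=
    ((chain_snd_invertedBy hX hY hAge x y n).norm_inclCLM_sub_le _ _).trans
      ((chain_snd_ε_le hX hY hAge x y n).trans (half_pow_succ_le n))

end GuardedFraisse

/-- Two separable Banach spaces satisfying (gF-2) with the same closed age are
linearly isometric. -/
theorem guardedFraisse_unique_by_age (X Y : Type*)
    [NormedAddCommGroup X] [NormedSpace ℝ X] [CompleteSpace X]
    [TopologicalSpace.SeparableSpace X]
    [NormedAddCommGroup Y] [NormedSpace ℝ Y] [CompleteSpace Y]
    [TopologicalSpace.SeparableSpace Y]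
    (hX : GF2 X) (hY : GF2 Y)
    (hAge : ∀ F : FinNormedSpace, FinRep F X ↔ FinRep F Y) :
    Nonempty (X ≃ₗᵢ[ℝ] Y) :=
  (GuardedFraisse.approxIntertwining hX hY hAge (TopologicalSpace.denseRange_denseSeq X)
    (TopologicalSpace.denseRange_denseSeq Y)).nonempty_linearIsometryEquiv
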